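/- Let π be a half-circle with center O and radius r > 0, and let p_1, …, p_N (N ≥ 3) be distinct points on π ordered along the arc. For each j ∈ {2, …, N−1}, let S_j ⊆ ℝ² be a set contained in the interior of triangle p_{j−1} p_j p_{j+1} and in the interior of triangle p_1 p_j p_N, and set S_1 = S_N = ∅. Then for all indices 1 ≤ l < q < j ≤ N, for every point x ∈ {p_l} ∪ S_l and every point y ∈ {p_j} ∪ S_j, the points x and y are distinct, all points of {p_q} ∪ S_q lie strictly in one of the two open half-planes bounded by the line through x and y, and the center O does not lie in that open half-plane. -/

import Mathlib

open Set Metric Bornology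
open scoped RealInnerProductSpace

noncomputable section

/-- The Euclidean plane. -/
abbrev E2 : Type := EuclideanSpace ℝ (Fin 2)

/-- The point of the circle with center `O` and radius `r` at angle `θ`. -/
def circPt (O : E2) (r θ : ℝ) : E2 :=
  O + r • (WithLp.equiv 2 (Fin 2 → ℝ)).symm ![Real.cos θ, Real.sin θ]

/-- The 2D cross product (signed area form) of two vectors of the plane. -/
def cross2 (u v : E2) : ℝ := u 0 * v 1 - u 1 * v 0

open scoped Topology
open Real

/-!
Write `orient x y z = cross2 (y - x) (z - x)` for twice the signed area of a triangle.
Points ordered along a half-circle are in convex position: for a sign `ε = ±1` fixed by the direction of travel,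
`ε * orient (p a) (p b) (p c) ≥ 0` whenever `a ≤ c ≤ b`, strictly if `a < c < b`, and the centre
lies on the non-positive side of every chord from `p a` to `p b` with `a ≤ b`; both follow from
`orient` of three points of a circle being `4 r² sin((β-α)/2) sin((γ-β)/2) sin((γ-α)/2)`.

A point of `{p i} ∪ S i` lies in the cell `conv {p (i-1), p i, p (i+1)} ∩ conv {p 1, p i, p N}`.
As `orient` is affine in each argument, its sign on a product of cells is controlled at vertices,
and choosing in each argument the right one of the two triangles makes every triple of vertex
indices cyclically ordered. Strict inequalities come from interior points: a nonconstant affine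
function that is nonnegative on a set is positive on its interior.
-/

def orient (x y z : E2) : ℝ := cross2 (y - x) (z - x)

lemma orient_eq (x y z : E2) :
    orient x y z = (y 0 - x 0) * (z 1 - x 1) - (y 1 - x 1) * (z 0 - x 0) := rfl

lemma orient_rotate (x y z : E2) : orient y z x = orient x y z := by
  simp only [orient_eq]; ring

lemma orient_swap (x y z : E2) : orient y x z = -orient x y z := by
  simp only [orient_eq]; ring

@[simp] lemma orient_self_left (x z : E2) : orient x x z = 0 := by
  simp only [orient_eq]; ring

@[simp] lemma orient_self_right (x y : E2) : orient x y y = 0 := by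
  simp only [orient_eq]; ring

@[simp] lemma orient_self_left_right (x y : E2) : orient x y x = 0 := by
  simp only [orient_eq]; ring

lemma orient_add_smul (x y z v : E2) (t : ℝ) :
    orient x y (z + t • v) = orient x y z + t * cross2 (y - x) v := by
  simp only [orient_eq, cross2, PiLp.add_apply, PiLp.smul_apply, PiLp.sub_apply, smul_eq_mul]
  ring

lemma convex_setOf_orient_nonneg (e : ℝ) (x y : E2) :
    Convex ℝ {z | 0 ≤ e * orient x y z} := by
  intro u hu v hv a b ha hb hab
  have key : orient x y (a • u + b • v) = a * orient x y u + b * orient x y v := by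
    simp only [orient_eq, PiLp.add_apply, PiLp.smul_apply, smul_eq_mul]
    linear_combination (x 1 - y 1) * (x 0) * hab - (x 0 - y 0) * x 1 * hab
  simp only [Set.mem_ofPred_eq] at hu hv ⊢
  rw [key]
  nlinarith [mul_nonneg ha hu, mul_nonneg hb hv]

lemma orient_nonneg_of_right_mem_convexHull {e : ℝ} {x y z : E2} {s : Set E2}
    (hs : ∀ w ∈ s, 0 ≤ e * orient x y w) (hz : z ∈ convexHull ℝ s) : 0 ≤ e * orient x y z :=
  convexHull_min hs (convex_setOf_orient_nonneg e x y) hz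

lemma orient_nonneg_of_left_mem_convexHull {e : ℝ} {x y z : E2} {s : Set E2}
    (hs : ∀ w ∈ s, 0 ≤ e * orient w y z) (hx : x ∈ convexHull ℝ s) : 0 ≤ e * orient x y z := by
  rw [← orient_rotate]
  exact orient_nonneg_of_right_mem_convexHull (fun w hw => orient_rotate w y z ▸ hs w hw) hx

lemma orient_nonneg_of_mid_mem_convexHull {e : ℝ} {x y z : E2} {s : Set E2}
    (hs : ∀ w ∈ s, 0 ≤ e * orient x w z) (hy : y ∈ convexHull ℝ s) : 0 ≤ e * orient x y z := by
  rw [orient_rotate]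
  exact orient_nonneg_of_right_mem_convexHull (fun w hw => orient_rotate z x w ▸ hs w hw) hy

lemma pos_of_nonneg_on_of_mem_interior {E : Type*} [NormedAddCommGroup E] [NormedSpace ℝ E]
    {f : E → ℝ} {s : Set E} {z v : E} {c : ℝ} (hc : 0 < c) (hs : ∀ w ∈ s, 0 ≤ f w)
    (hz : z ∈ interior s) (hf : ∀ t : ℝ, f (z + t • v) = f z - t * c) : 0 < f z := by
  have hline : ∀ᶠ t in 𝓝[>] (0 : ℝ), z + t • v ∈ s := by
    refine nhdsWithin_le_nhds (ContinuousAt.preimage_mem_nhds (by fun_prop) ?_)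
    simpa using mem_interior_iff_mem_nhds.mp hz
  obtain ⟨t, hts, ht⟩ := (hline.and self_mem_nhdsWithin).exists
  have := hs _ hts
  rw [hf] at this
  nlinarith [mul_pos (show (0:ℝ) < t from ht) hc]

lemma orient_pos_of_mem_interior {e : ℝ} (he : e ≠ 0) {x y z : E2} (hxy : x ≠ y) {s : Set E2}
    (hs : ∀ w ∈ s, 0 ≤ e * orient x y w) (hz : z ∈ interior s) : 0 < e * orient x y z := by
  set d := y - x
  have hd : 0 < d 0 ^ 2 + d 1 ^ 2 := by
    have hd0 : d ≠ 0 := sub_ne_zero.mpr hxy.symm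
    have : ‖d‖ ^ 2 = d 0 ^ 2 + d 1 ^ 2 := by
      rw [EuclideanSpace.norm_sq_eq]; simp [Fin.sum_univ_two]
    rw [← this]; positivity
  refine pos_of_nonneg_on_of_mem_interior (f := fun w => e * orient x y w)
    (v := (-e) • !₂[-d 1, d 0]) (c := e ^ 2 * (d 0 ^ 2 + d 1 ^ 2)) (by positivity) hs hz
    fun t => ?_
  rw [orient_add_smul]
  simp [cross2, d]
  ring

lemma circPt_apply_zero (O : E2) (r θ : ℝ) : circPt O r θ 0 = O 0 + r * cos θ := by
  simp [circPt]

lemma circPt_apply_one (O : E2) (r θ : ℝ) : circPt O r θ 1 = O 1 + r * sin θ := by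
  simp [circPt]

lemma sin_two_mul_add_sin_two_mul_sub_sin (u v : ℝ) :
    sin (2 * u) + sin (2 * v) - sin (2 * (u + v)) = 4 * sin u * sin v * sin (u + v) := by
  simp only [mul_add, sin_add, sin_two_mul, cos_two_mul]
  linear_combination (-4 * sin v * cos v) * sin_sq_add_cos_sq u
    - 4 * sin u * cos u * sin_sq_add_cos_sq v

lemma orient_circPt (O : E2) (r α β γ : ℝ) :
    orient (circPt O r α) (circPt O r β) (circPt O r γ) =
      4 * r ^ 2 * sin ((β - α) / 2) * sin ((γ - β) / 2) * sin ((γ - α) / 2) := by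
  have key := sin_two_mul_add_sin_two_mul_sub_sin ((β - α) / 2) ((γ - β) / 2)
  rw [show 2 * ((β - α) / 2) = β - α by ring, show 2 * ((γ - β) / 2) = γ - β by ring,
    show 2 * ((β - α) / 2 + (γ - β) / 2) = γ - α by ring,
    show (β - α) / 2 + (γ - β) / 2 = (γ - α) / 2 by ring] at key
  rw [sin_sub, sin_sub, sin_sub] at key
  simp only [orient_eq, circPt_apply_zero, circPt_apply_one]
  linear_combination r ^ 2 * key

lemma orient_circPt_center (O : E2) (r α β : ℝ) :
    orient (circPt O r α) (circPt O r β) O = r ^ 2 * sin (β - α) := by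
  simp only [orient_eq, circPt_apply_zero, circPt_apply_one, sin_sub]
  ring

lemma orient_circPt_nonpos (O : E2) (r : ℝ) {α β γ : ℝ} (hαγ : α ≤ γ) (hγβ : γ ≤ β)
    (hβα : β - α ≤ π) : orient (circPt O r α) (circPt O r β) (circPt O r γ) ≤ 0 := by
  rw [orient_circPt]
  have h₁ : 0 ≤ sin ((β - α) / 2) := sin_nonneg_of_nonneg_of_le_pi (by linarith) (by linarith)
  have h₂ : sin ((γ - β) / 2) ≤ 0 := sin_nonpos_of_nonpos_of_neg_pi_le (by linarith) (by linarith)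
  have h₃ : 0 ≤ sin ((γ - α) / 2) := sin_nonneg_of_nonneg_of_le_pi (by linarith) (by linarith)
  have := mul_nonpos_of_nonneg_of_nonpos (mul_nonneg (by positivity : (0:ℝ) ≤ 4 * r ^ 2) h₁) h₂
  exact mul_nonpos_of_nonpos_of_nonneg this h₃

lemma orient_circPt_neg (O : E2) {r α β γ : ℝ} (hr : r ≠ 0) (hαγ : α < γ) (hγβ : γ < β)
    (hβα : β - α ≤ π) : orient (circPt O r α) (circPt O r β) (circPt O r γ) < 0 := by
  rw [orient_circPt]
  have h₁ : 0 < sin ((β - α) / 2) := sin_pos_of_pos_of_lt_pi (by linarith) (by linarith)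
  have h₂ : sin ((γ - β) / 2) < 0 := sin_neg_of_neg_of_neg_pi_lt (by linarith) (by linarith)
  have h₃ : 0 < sin ((γ - α) / 2) := sin_pos_of_pos_of_lt_pi (by linarith) (by linarith)
  have := mul_neg_of_pos_of_neg (mul_pos (by positivity : (0:ℝ) < 4 * r ^ 2) h₁) h₂
  exact mul_neg_of_neg_of_pos this h₃

structure IsOrientedArc (p : ℕ → E2) (N : ℕ) (O : E2) (ε : ℝ) : Prop where
  nonneg : ∀ ⦃a b c : ℕ⦄, 1 ≤ a → a ≤ c → c ≤ b → b ≤ N → 0 ≤ ε * orient (p a) (p b) (p c)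
  pos : ∀ ⦃a b c : ℕ⦄, 1 ≤ a → a < c → c < b → b ≤ N → 0 < ε * orient (p a) (p b) (p c)
  center_nonpos : ∀ ⦃a b : ℕ⦄, 1 ≤ a → a ≤ b → b ≤ N → ε * orient (p a) (p b) O ≤ 0

section HalfCircle

variable {O : E2} {r θ₀ : ℝ} {N : ℕ} {θ : ℕ → ℝ} {p : ℕ → E2}

lemma sub_le_pi_of_mem_halfCircle (hθ : ∀ i ∈ Icc 1 N, θ i ∈ Icc θ₀ (θ₀ + π)) {a b : ℕ}
    (ha : a ∈ Icc 1 N) (hb : b ∈ Icc 1 N) : θ b - θ a ≤ π := by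
  have := hθ a ha; have := hθ b hb
  simp only [mem_Icc] at *; linarith

lemma isOrientedArc_of_strictMonoOn (hr : 0 < r) (hmono : StrictMonoOn θ (Icc 1 N))
    (hθ : ∀ i ∈ Icc 1 N, θ i ∈ Icc θ₀ (θ₀ + π)) (hp : ∀ i ∈ Icc 1 N, p i = circPt O r (θ i)) :
    IsOrientedArc p N O (-1) where
  nonneg a b c ha hac hcb hb := by
    have ha : a ∈ Icc 1 N := ⟨ha, by omega⟩
    have hb : b ∈ Icc 1 N := ⟨by omega, hb⟩
    have hc : c ∈ Icc 1 N := ⟨by omega, by omega⟩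
    rw [hp a ha, hp b hb, hp c hc]
    linarith [orient_circPt_nonpos O r (hmono.monotoneOn ha hc hac)
      (hmono.monotoneOn hc hb hcb) (sub_le_pi_of_mem_halfCircle hθ ha hb)]
  pos a b c ha hac hcb hb := by
    have ha : a ∈ Icc 1 N := ⟨ha, by omega⟩
    have hb : b ∈ Icc 1 N := ⟨by omega, hb⟩
    have hc : c ∈ Icc 1 N := ⟨by omega, by omega⟩
    rw [hp a ha, hp b hb, hp c hc]
    linarith [orient_circPt_neg O hr.ne' (hmono ha hc hac) (hmono hc hb hcb)
      (sub_le_pi_of_mem_halfCircle hθ ha hb)]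
  center_nonpos a b ha hab hb := by
    have ha : a ∈ Icc 1 N := ⟨ha, by omega⟩
    have hb : b ∈ Icc 1 N := ⟨by omega, hb⟩
    rw [hp a ha, hp b hb, orient_circPt_center]
    have := sin_nonneg_of_nonneg_of_le_pi (sub_nonneg.2 (hmono.monotoneOn ha hb hab))
      (sub_le_pi_of_mem_halfCircle hθ ha hb)
    nlinarith [sq_nonneg r]

lemma isOrientedArc_of_strictAntiOn (hr : 0 < r) (hanti : StrictAntiOn θ (Icc 1 N))
    (hθ : ∀ i ∈ Icc 1 N, θ i ∈ Icc θ₀ (θ₀ + π)) (hp : ∀ i ∈ Icc 1 N, p i = circPt O r (θ i)) :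
    IsOrientedArc p N O 1 where
  nonneg a b c ha hac hcb hb := by
    have ha : a ∈ Icc 1 N := ⟨ha, by omega⟩
    have hb : b ∈ Icc 1 N := ⟨by omega, hb⟩
    have hc : c ∈ Icc 1 N := ⟨by omega, by omega⟩
    rw [hp a ha, hp b hb, hp c hc, orient_swap]
    linarith [orient_circPt_nonpos O r (hanti.antitoneOn hc hb hcb)
      (hanti.antitoneOn ha hc hac) (sub_le_pi_of_mem_halfCircle hθ hb ha)]
  pos a b c ha hac hcb hb := by
    have ha : a ∈ Icc 1 N := ⟨ha, by omega⟩
    have hb : b ∈ Icc 1 N := ⟨by omega, hb⟩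
    have hc : c ∈ Icc 1 N := ⟨by omega, by omega⟩
    rw [hp a ha, hp b hb, hp c hc, orient_swap]
    linarith [orient_circPt_neg O hr.ne' (hanti hc hb hcb) (hanti ha hc hac)
      (sub_le_pi_of_mem_halfCircle hθ hb ha)]
  center_nonpos a b ha hab hb := by
    have ha : a ∈ Icc 1 N := ⟨ha, by omega⟩
    have hb : b ∈ Icc 1 N := ⟨by omega, hb⟩
    rw [hp a ha, hp b hb, orient_circPt_center]
    have := sin_nonpos_of_nonpos_of_neg_pi_le (sub_nonpos.2 (hanti.antitoneOn ha hb hab))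
      (by linarith [sub_le_pi_of_mem_halfCircle hθ hb ha])
    nlinarith [sq_nonneg r]

end HalfCircle

-- Indices outside `1, …, N` are dropped, so the cells at both ends use only points of the arc.
def arcCell (p : ℕ → E2) (N i : ℕ) : Set E2 :=
  convexHull ℝ (p '' (Icc (i - 1) (i + 1) ∩ Icc 1 N)) ∩ convexHull ℝ (p '' {1, i, N})

lemma self_mem_arcCell {p : ℕ → E2} {N i : ℕ} (hi : 1 ≤ i) (hiN : i ≤ N) :
    p i ∈ arcCell p N i :=
  ⟨subset_convexHull ℝ _ ⟨i, ⟨⟨by omega, by omega⟩, hi, hiN⟩, rfl⟩,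
    subset_convexHull ℝ _ ⟨i, by simp, rfl⟩⟩

lemma mem_arcCell_of_eq_or_mem_interior {p : ℕ → E2} {N i : ℕ} (hi : 1 ≤ i) (hiN : i ≤ N)
    {x : E2} (hx : x = p i ∨ x ∈ interior (arcCell p N i)) : x ∈ arcCell p N i :=
  hx.elim (· ▸ self_mem_arcCell hi hiN) (interior_subset ·)

lemma eq_or_mem_interior_arcCell {p : ℕ → E2} {N : ℕ} {S : ℕ → Set E2}
    (hS : ∀ j : ℕ, 2 ≤ j → j ≤ N - 1 →
      S j ⊆ interior (convexHull ℝ {p (j - 1), p j, p (j + 1)}) ∧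
      S j ⊆ interior (convexHull ℝ {p 1, p j, p N}))
    (hS1 : S 1 = ∅) (hSN : S N = ∅) {i : ℕ} (hi : 1 ≤ i) (hiN : i ≤ N) {x : E2}
    (hx : x ∈ insert (p i) (S i)) : x = p i ∨ x ∈ interior (arcCell p N i) := by
  rcases hx with rfl | hx
  · exact .inl rfl
  have hi1 : i ≠ 1 := by rintro rfl; simp [hS1] at hx
  have hiN' : i ≠ N := by rintro rfl; simp [hSN] at hx
  obtain ⟨h₁, h₂⟩ := hS i (by omega) (by omega)
  rw [arcCell, interior_inter]
  refine .inr ⟨interior_mono (convexHull_mono ?_) (h₁ hx),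
    interior_mono (convexHull_mono ?_) (h₂ hx)⟩
  · simp only [insert_subset_iff, singleton_subset_iff]
    refine ⟨⟨i - 1, ?_, rfl⟩, ⟨i, ?_, rfl⟩, ⟨i + 1, ?_, rfl⟩⟩ <;>
      simp only [mem_inter_iff, mem_Icc] <;> omega
  · simp [image_insert_eq]

namespace IsOrientedArc

variable {p : ℕ → E2} {N : ℕ} {O : E2} {ε : ℝ}

lemma nonneg_of_cyclic (h : IsOrientedArc p N O ε) {a b c : ℕ} (ha : 1 ≤ a) (hb : 1 ≤ b)
    (hc : 1 ≤ c) (haN : a ≤ N) (hbN : b ≤ N) (hcN : c ≤ N)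
    (hcyc : a ≤ c ∧ c ≤ b ∨ c ≤ b ∧ b ≤ a ∨ b ≤ a ∧ a ≤ c) :
    0 ≤ ε * orient (p a) (p b) (p c) := by
  rcases hcyc with ⟨h₁, h₂⟩ | ⟨h₁, h₂⟩ | ⟨h₁, h₂⟩
  · exact h.nonneg ha h₁ h₂ hbN
  · rw [orient_rotate]; exact h.nonneg hc h₁ h₂ haN
  · rw [← orient_rotate]; exact h.nonneg hb h₁ h₂ hcN

lemma orient_nonneg (h : IsOrientedArc p N O ε) {l q j : ℕ} (hl : 1 ≤ l) (hlq : l < q)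
    (hqj : q < j) (hjN : j ≤ N) {x y z : E2} (hx : x ∈ convexHull ℝ (p '' {1, l, N}))
    (hy : y ∈ arcCell p N j) (hz : z ∈ arcCell p N q) : 0 ≤ ε * orient x y z := by
  obtain ⟨hy₁, hy₂⟩ := hy
  obtain ⟨hz₁, hz₂⟩ := hz
  refine orient_nonneg_of_left_mem_convexHull (forall_mem_image.2 fun a ha => ?_) hx
  simp only [mem_insert_iff, mem_singleton_iff] at ha
  -- seen from `p N`, use the triangle `p (j-1) p j p (j+1)` for `y` and `p 1 p q p N` for `z`;
  -- seen from `p 1` or `p l`, the other way round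
  by_cases haN : a = N
  · refine orient_nonneg_of_mid_mem_convexHull (forall_mem_image.2 fun b hb => ?_) hy₁
    refine orient_nonneg_of_right_mem_convexHull (forall_mem_image.2 fun c hc => ?_) hz₂
    simp only [mem_inter_iff, mem_Icc, mem_insert_iff, mem_singleton_iff] at hb hc
    apply h.nonneg_of_cyclic <;> omega
  · refine orient_nonneg_of_mid_mem_convexHull (forall_mem_image.2 fun b hb => ?_) hy₂
    refine orient_nonneg_of_right_mem_convexHull (forall_mem_image.2 fun c hc => ?_) hz₁
    simp only [mem_inter_iff, mem_Icc, mem_insert_iff, mem_singleton_iff] at hb hc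
    apply h.nonneg_of_cyclic <;> omega

lemma orient_center_nonpos (h : IsOrientedArc p N O ε) {l j : ℕ} (hlj : l + 2 ≤ j) {x y : E2}
    (hx : x ∈ arcCell p N l) (hy : y ∈ arcCell p N j) : ε * orient x y O ≤ 0 := by
  suffices 0 ≤ -ε * orient x y O by linarith
  refine orient_nonneg_of_left_mem_convexHull (forall_mem_image.2 fun a ha => ?_) hx.1
  refine orient_nonneg_of_mid_mem_convexHull (forall_mem_image.2 fun b hb => ?_) hy.1
  simp only [mem_inter_iff, mem_Icc] at ha hb
  linarith [h.center_nonpos (a := a) (b := b) (by omega) (by omega) (by omega)]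

lemma orient_pos (h : IsOrientedArc p N O ε) {l q j : ℕ} (hl : 1 ≤ l) (hlq : l < q)
    (hqj : q < j) (hjN : j ≤ N) {x y z : E2} (hx : x = p l ∨ x ∈ interior (arcCell p N l))
    (hy : y = p j ∨ y ∈ interior (arcCell p N j)) (hz : z = p q ∨ z ∈ interior (arcCell p N q)) :
    0 < ε * orient x y z := by
  have hlqj := h.pos hl hlq hqj hjN
  have hε : ε ≠ 0 := by rintro rfl; simp at hlqj
  have hpl : p l ∈ convexHull ℝ (p '' {1, l, N}) := subset_convexHull ℝ _ ⟨l, by simp, rfl⟩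
  have hq := self_mem_arcCell (p := p) (by omega : 1 ≤ q) (by omega : q ≤ N)
  have hxc := mem_arcCell_of_eq_or_mem_interior hl (by omega) hx
  have hyc := mem_arcCell_of_eq_or_mem_interior (by omega) hjN hy
  -- each strict inequality makes the next affine function nonconstant
  have hly : 0 < ε * orient (p l) y (p q) := by
    rcases hy with rfl | hy
    · exact hlqj
    rw [orient_rotate]
    refine orient_pos_of_mem_interior hε (fun hql => ?_) (fun w hw => ?_) hy
    · simp [hql] at hlqj
    · rw [← orient_rotate]; exact h.orient_nonneg hl hlq hqj hjN hpl hw hq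
  have hxy : 0 < ε * orient x y (p q) := by
    rcases hx with rfl | hx
    · exact hly
    rw [← orient_rotate]
    refine orient_pos_of_mem_interior hε (fun hyq => ?_) (fun w hw => ?_) hx
    · simp [hyq] at hly
    · rw [orient_rotate]; exact h.orient_nonneg hl hlq hqj hjN hw.2 hyc hq
  rcases hz with rfl | hz
  · exact hxy
  refine orient_pos_of_mem_interior hε (fun hxy' => ?_) (fun w hw => ?_) hz
  · simp [hxy'] at hxy
  · exact h.orient_nonneg hl hlq hqj hjN hxc.2 hyc hw

end IsOrientedArc

theorem separation_property_general (O : E2) (r : ℝ) (hr : 0 < r) (θ₀ : ℝ)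
    (N : ℕ) (θ : ℕ → ℝ) (p : ℕ → E2) (S : ℕ → Set E2)
    (hmono : StrictMonoOn θ (Set.Icc 1 N) ∨ StrictAntiOn θ (Set.Icc 1 N))
    (hθ : ∀ i ∈ Set.Icc 1 N, θ i ∈ Set.Icc θ₀ (θ₀ + Real.pi))
    (hp : ∀ i ∈ Set.Icc 1 N, p i = circPt O r (θ i))
    (hS : ∀ j : ℕ, 2 ≤ j → j ≤ N - 1 →
      S j ⊆ interior (convexHull ℝ {p (j - 1), p j, p (j + 1)}) ∧
      S j ⊆ interior (convexHull ℝ {p 1, p j, p N}))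
    (hS1 : S 1 = ∅) (hSN : S N = ∅) :
    ∀ l q j : ℕ, 1 ≤ l → l < q → q < j → j ≤ N →
      ∀ x ∈ insert (p l) (S l), ∀ y ∈ insert (p j) (S j),
        x ≠ y ∧
        ∃ s : ℝ, (s = 1 ∨ s = -1) ∧
          (∀ z ∈ insert (p q) (S q), 0 < s * cross2 (y - x) (z - x)) ∧
          ¬ (0 < s * cross2 (y - x) (O - x)) := by
  obtain ⟨ε, hε, harc⟩ : ∃ ε : ℝ, (ε = 1 ∨ ε = -1) ∧ IsOrientedArc p N O ε := by
    rcases hmono with hmono | hanti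
    · exact ⟨-1, .inr rfl, isOrientedArc_of_strictMonoOn hr hmono hθ hp⟩
    · exact ⟨1, .inl rfl, isOrientedArc_of_strictAntiOn hr hanti hθ hp⟩
  intro l q j hl hlq hqj hjN x hx y hy
  have hx' := eq_or_mem_interior_arcCell hS hS1 hSN hl (by omega) hx
  have hy' := eq_or_mem_interior_arcCell hS hS1 hSN (by omega) hjN hy
  have hpos : ∀ z ∈ insert (p q) (S q), 0 < ε * orient x y z := fun z hz =>
    harc.orient_pos hl hlq hqj hjN hx' hy'
      (eq_or_mem_interior_arcCell hS hS1 hSN (by omega) (by omega) hz)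
  refine ⟨?_, ε, hε, hpos, not_lt.2 ?_⟩
  · rintro rfl
    simpa using hpos (p q) (mem_insert _ _)
  · exact harc.orient_center_nonpos (by omega) (mem_arcCell_of_eq_or_mem_interior hl (by omega) hx')
      (mem_arcCell_of_eq_or_mem_interior (by omega) hjN hy')

/-- Visibility property of the point set: for points `p 1, …, p N` ordered along a
half-circle with center `O`, with each `S j` contained in the interiors of the
triangles `p (j-1) p j p (j+1)` and `p 1 p j p N` (and `S 1 = S N = ∅`), any two
points `x ∈ {p l} ∪ S l` and `y ∈ {p j} ∪ S j` with `l < q < j` are distinct, all of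
`{p q} ∪ S q` lies strictly in one of the two open half-planes bounded by the line
through `x` and `y`, and `O` does not lie in that open half-plane. -/
theorem separation_property (O : E2) (r : ℝ) (hr : 0 < r) (θ₀ : ℝ)
    (N : ℕ) (hN : 3 ≤ N) (θ : ℕ → ℝ) (p : ℕ → E2) (S : ℕ → Set E2)
    (hmono : StrictMonoOn θ (Set.Icc 1 N) ∨ StrictAntiOn θ (Set.Icc 1 N))
    (hθ : ∀ i ∈ Set.Icc 1 N, θ i ∈ Set.Icc θ₀ (θ₀ + Real.pi))
    (hp : ∀ i ∈ Set.Icc 1 N, p i = circPt O r (θ i))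
    (hS : ∀ j : ℕ, 2 ≤ j → j ≤ N - 1 →
      S j ⊆ interior (convexHull ℝ {p (j - 1), p j, p (j + 1)}) ∧
      S j ⊆ interior (convexHull ℝ {p 1, p j, p N}))
    (hS1 : S 1 = ∅) (hSN : S N = ∅) :
    ∀ l q j : ℕ, 1 ≤ l → l < q → q < j → j ≤ N →
      ∀ x ∈ insert (p l) (S l), ∀ y ∈ insert (p j) (S j),
        x ≠ y ∧
        ∃ s : ℝ, (s = 1 ∨ s = -1) ∧
          (∀ z ∈ insert (p q) (S q), 0 < s * cross2 (y - x) (z - x)) ∧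
          ¬ (0 < s * cross2 (y - x) (O - x)) :=
  separation_property_general O r hr θ₀ N θ p S hmono hθ hp hS hS1 hSN

end
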